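/- arXiv:1804.01207 — 2 statements merged into one kernel-verified Lean document; each statement's English description precedes it below -/
import Mathlib

section
/- (Lower bound on the second moment of any admissible cycle) Let N ≥ 1, let A be a finite alphabet with multiplicities m : A → ℕ satisfying m(a) ≥ 1 for all a and ∑_{a∈A} m(a) = N. Then for every admissible cycle C : ZMod N → A, the sum of squared distances satisfies ∑_{j : ZMod N} Δ_C(j)² ≥ ∑_{a∈A} N²/m(a), as rational numbers. Equivalently, M₂(C) ≥ ∑_{a∈A} N/m(a). -/
open Finset

/-- The distance from position `j` to the next occurrence of the same symbol:
the least positive `d` with `C (j + d) = C j`. -/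
noncomputable def cycleDist {N : ℕ} {A : Type*} (C : ZMod N → A) (j : ZMod N) : ℕ :=
  sInf {d : ℕ | 0 < d ∧ C (j + (d : ZMod N)) = C j}

/-- A cycle is admissible for multiplicities `m` if every fiber has the prescribed size. -/
def Admissible {N : ℕ} [NeZero N] {A : Type*} [Fintype A] [DecidableEq A]
    (m : A → ℕ) (C : ZMod N → A) : Prop :=
  ∀ a : A, (Finset.univ.filter (fun j => C j = a)).card = m a

/-- The mean of a cycle. -/
noncomputable def cycleMean {N : ℕ} [NeZero N] {A : Type*} (C : ZMod N → A) : ℚ :=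
  (∑ j : ZMod N, (cycleDist C j : ℚ)) / N

/-- The second (raw) moment of a cycle. -/
noncomputable def cycleMoment2 {N : ℕ} [NeZero N] {A : Type*} (C : ZMod N → A) : ℚ :=
  (∑ j : ZMod N, (cycleDist C j : ℚ) ^ 2) / N

/-- The variance of a cycle. -/
noncomputable def cycleVariance {N : ℕ} [NeZero N] {A : Type*} (C : ZMod N → A) : ℚ :=
  (∑ j : ZMod N, ((cycleDist C j : ℚ) - cycleMean C) ^ 2) / N


/-!
The positions of a symbol `a` cut the cycle into consecutive arcs `[j, j + Δ(j))`, so the distances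
over the fiber of `a` sum to `N`; the arc containing `k` is recovered from the backward distance
from `k` to the last occurrence of `a`. Cauchy–Schwarz on a fiber of size `m(a)` then gives
`∑_{C j = a} Δ(j)² ≥ N² / m(a)`, and summing over `a` gives the bound.
-/

section CycleDist

variable {N : ℕ} {A : Type*} (C : ZMod N → A)

lemma cycleDist_le {j : ZMod N} {d : ℕ} (hd : 0 < d) (h : C (j + d) = C j) : cycleDist C j ≤ d :=
  Nat.sInf_le ⟨hd, h⟩

lemma cycleDist_pos_and_apply [NeZero N] (j : ZMod N) :
    0 < cycleDist C j ∧ C (j + cycleDist C j) = C j :=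
  Nat.sInf_mem (s := {d : ℕ | 0 < d ∧ C (j + d) = C j}) ⟨N, NeZero.pos N, by simp⟩

noncomputable def cycleBackDist (a : A) (k : ZMod N) : ℕ :=
  sInf {d : ℕ | C (k - d) = a}

variable {C} {a : A}

lemma cycleBackDist_le {k : ZMod N} {d : ℕ} (h : C (k - d) = a) : cycleBackDist C a k ≤ d :=
  Nat.sInf_le h

variable [NeZero N]

lemma apply_sub_cycleBackDist (ha : ∃ j, C j = a) (k : ZMod N) :
    C (k - cycleBackDist C a k) = a := by
  obtain ⟨j, hj⟩ := ha
  exact Nat.sInf_mem (s := {d : ℕ | C (k - d) = a}) ⟨(k - j).val, by simpa using hj⟩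

lemma cycleBackDist_lt_cycleDist (ha : ∃ j, C j = a) (k : ZMod N) :
    cycleBackDist C a k < cycleDist C (k - cycleBackDist C a k) := by
  set e := cycleBackDist C a k
  set D := cycleDist C (k - e)
  obtain ⟨hpos, hnext⟩ := cycleDist_pos_and_apply C (k - e)
  by_contra! hle
  have : C (k - (e - D : ℕ)) = a := by
    rw [Nat.cast_sub hle, show k - (e - D : ZMod N) = k - e + D by ring, hnext]
    exact apply_sub_cycleBackDist ha k
  have := cycleBackDist_le this
  omega

lemma cycleBackDist_add_of_lt {j : ZMod N} (hj : C j = a) {i : ℕ} (hi : i < cycleDist C j) :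
    cycleBackDist C a (j + i) = i := by
  set e := cycleBackDist C a (j + i)
  have hle : e ≤ i := cycleBackDist_le (by simpa using hj)
  by_contra hne
  have : C (j + (i - e : ℕ)) = C j := by
    rw [Nat.cast_sub hle, ← add_sub_assoc, apply_sub_cycleBackDist ⟨j, hj⟩, hj]
  have := cycleDist_le C (by omega) this
  omega

end CycleDist

section Fiber

variable {N : ℕ} [NeZero N] {A : Type*} [DecidableEq A] {C : ZMod N → A}

lemma sum_cycleDist_filter_eq {a : A} (ha : ∃ j, C j = a) :
    ∑ j with C j = a, cycleDist C j = N := by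
  calc ∑ j with C j = a, cycleDist C j
      = #(({j | C j = a} : Finset (ZMod N)).sigma fun j => range (cycleDist C j)) := by
        simp [card_sigma]
    _ = #(univ : Finset (ZMod N)) := by
      refine card_nbij' (fun p => p.1 + p.2)
        (fun k => ⟨k - cycleBackDist C a k, cycleBackDist C a k⟩) (by simp) ?_ ?_
        (fun k _ => sub_add_cancel _ _)
      · intro k _
        simpa using ⟨apply_sub_cycleBackDist ha k, cycleBackDist_lt_cycleDist ha k⟩
      · rintro ⟨j, i⟩ hji
        obtain ⟨hj, hi⟩ : C j = a ∧ i < cycleDist C j := by simpa using hji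
        simp [cycleBackDist_add_of_lt hj hi]
    _ = N := by simp

variable (C) {R : Type*} [Field R] [LinearOrder R] [IsStrictOrderedRing R]

lemma sq_div_card_filter_le_sum_sq (a : A) :
    (N : R) ^ 2 / #{j | C j = a} ≤ ∑ j with C j = a, (cycleDist C j : R) ^ 2 := by
  obtain hempty | ⟨j, hj⟩ := ({j | C j = a} : Finset (ZMod N)).eq_empty_or_nonempty
  · simp [hempty]
  have hsum : ∑ j with C j = a, (cycleDist C j : R) = N := by
    exact_mod_cast sum_cycleDist_filter_eq ⟨j, (mem_filter.1 hj).2⟩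
  have := pow_sum_div_card_le_sum_pow (s := {j | C j = a})
    (fun j _ => Nat.cast_nonneg (α := R) (cycleDist C j)) 1
  simpa [hsum] using this

end Fiber

theorem lower_bound_moment2_general {N : ℕ} [NeZero N] {A : Type*} [Fintype A] [DecidableEq A]
    (m : A → ℕ) (C : ZMod N → A) (hC : Admissible m C) :
    (∑ a : A, (N : ℚ) ^ 2 / (m a : ℚ)) ≤ ∑ j : ZMod N, (cycleDist C j : ℚ) ^ 2 ∧
    (∑ a : A, (N : ℚ) / (m a : ℚ)) ≤ cycleMoment2 C := by
  have hsq : ∑ a : A, (N : ℚ) ^ 2 / (m a : ℚ) ≤ ∑ j : ZMod N, (cycleDist C j : ℚ) ^ 2 := by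
    rw [← sum_fiberwise univ C]
    gcongr with a
    rw [← hC a]
    exact sq_div_card_filter_le_sum_sq C a
  refine ⟨hsq, ?_⟩
  rw [cycleMoment2, le_div_iff₀ (Nat.cast_pos.2 (NeZero.pos N)), sum_mul]
  refine (sum_congr rfl fun a _ => ?_).trans_le hsq
  ring

/-- Lower bound on the second moment of any admissible cycle:
`∑_j Δ_C(j)² ≥ ∑_a N²/m(a)`, equivalently `M₂(C) ≥ ∑_a N/m(a)`. -/
theorem lower_bound_moment2 {N : ℕ} [NeZero N] {A : Type*} [Fintype A] [DecidableEq A]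
    (m : A → ℕ) (hm : ∀ a, 1 ≤ m a) (hsum : ∑ a, m a = N)
    (C : ZMod N → A) (hC : Admissible m C) :
    (∑ a : A, (N : ℚ) ^ 2 / (m a : ℚ)) ≤ ∑ j : ZMod N, (cycleDist C j : ℚ) ^ 2 ∧
    (∑ a : A, (N : ℚ) / (m a : ℚ)) ≤ cycleMoment2 C :=
  lower_bound_moment2_general m C hC
end

section
/- (Sufficiency of the Euclidean distance profile for variance minimality) Let m₁ ≥ m₂ ≥ 1 be natural numbers, N = m₁ + m₂, ℓ = ⌊N/m₂⌋ and u = ⌈N/m₂⌉. Suppose C : ZMod N → {a₁, a₂} is an admissible cycle (fibers of sizes m₁ and m₂) such that: exactly m₁ − m₂ instances of a₁ have Δ_C(j) = 1 and exactly m₂ instances of a₁ have Δ_C(j) = 2; and every instance of a₂ has Δ_C(j) ∈ {ℓ, u}. Then C minimizes the variance: for every admissible cycle C', σ²(C) ≤ σ²(C'). -/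
open Finset

/-!
For each symbol `a`, the stretches from an occurrence of `a` up to the next one partition the
cycle, so the distances of a nonempty fiber sum to `N`. Hence the mean depends only on the fiber
sizes, and for cycles with equal fiber sizes comparing variances amounts to comparing sums of
squared distances, fiber by fiber. Given the size and the sum of a fiber, its sum of squares is
least when all its distances take two consecutive values; the Euclidean profile has this form,
with values `{1, 2}` for `a₁` and `{ℓ, u} ⊆ {ℓ, ℓ + 1}` for `a₂`.
-/

theorem Nat.add_sub_one_div_eq_div_or_eq_div_add_one (n m : ℕ) :
    (n + m - 1) / m = n / m ∨ (n + m - 1) / m = n / m + 1 := by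
  rcases Nat.eq_zero_or_pos m with rfl | hm
  · simp
  have hlow : n / m ≤ (n + m - 1) / m := Nat.div_le_div_right (by omega)
  have hup := Nat.add_div_le_div_add_div_add_one n (m - 1) m
  rw [Nat.div_eq_of_lt (by omega : m - 1 < m), show n + (m - 1) = n + m - 1 by omega] at hup
  omega

section CycleDist

variable {N : ℕ} [NeZero N] {A : Type*}

theorem cycleDist_spec (C : ZMod N → A) (j : ZMod N) :
    0 < cycleDist C j ∧ C (j + (cycleDist C j : ZMod N)) = C j :=
  Nat.sInf_mem (s := {d : ℕ | 0 < d ∧ C (j + (d : ZMod N)) = C j})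
    ⟨N, Nat.pos_of_ne_zero (NeZero.ne N), by simp⟩

omit [NeZero N] in
theorem apply_add_ne_of_lt_cycleDist (C : ZMod N → A) (j : ZMod N) {d : ℕ} (hd : 0 < d)
    (hlt : d < cycleDist C j) : C (j + (d : ZMod N)) ≠ C j :=
  fun h => Nat.notMem_of_lt_sInf hlt ⟨hd, h⟩

omit [NeZero N] in
theorem eq_of_add_eq_add_of_lt_cycleDist (C : ZMod N → A) {j j' : ZMod N} (hC : C j = C j')
    {t t' : ℕ} (ht : t < cycleDist C j) (ht' : t' < cycleDist C j')
    (h : j + (t : ZMod N) = j' + (t' : ZMod N)) : j = j' ∧ t = t' := by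
  wlog hle : t ≤ t' generalizing j j' t t'
  · obtain ⟨hj, htt⟩ := this hC.symm ht' ht h.symm (by omega)
    exact ⟨hj.symm, htt.symm⟩
  have hj : j = j' + ((t' - t : ℕ) : ZMod N) := by
    rw [Nat.cast_sub hle]; linear_combination h
  obtain rfl : t = t' := by
    by_contra hne
    exact apply_add_ne_of_lt_cycleDist C j' (by omega) (by omega) (hj ▸ hC)
  simpa using hj

/-- Every position lies in the stretch of the last occurrence of `a` at or before it. -/
theorem exists_add_eq_of_lt_cycleDist (C : ZMod N → A) {a : A} (ha : ∃ j, C j = a)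
    (k : ZMod N) : ∃ j t, C j = a ∧ t < cycleDist C j ∧ j + (t : ZMod N) = k := by
  classical
  obtain ⟨j₀, hj₀⟩ := ha
  have hback : ∃ s : ℕ, C (k - s) = a := ⟨(k - j₀).val, by simpa using hj₀⟩
  obtain ⟨t, ht, hmin⟩ : ∃ t : ℕ, C (k - t) = a ∧ ∀ s < t, C (k - s) ≠ a :=
    ⟨Nat.find hback, Nat.find_spec hback, fun s hs => Nat.find_min hback hs⟩
  refine ⟨k - t, t, ht, ?_, by ring⟩
  by_contra! hle
  obtain ⟨hpos, hnext⟩ := cycleDist_spec C (k - t)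
  refine hmin (t - cycleDist C (k - t)) (by omega) ?_
  rw [Nat.cast_sub hle, ← ht, ← hnext]
  ring_nf

theorem sum_cycleDist_fiber [DecidableEq A] (C : ZMod N → A) {a : A} (ha : ∃ j, C j = a) :
    ∑ j ∈ univ.filter (fun j => C j = a), cycleDist C j = N := by
  calc ∑ j ∈ univ.filter (fun j => C j = a), cycleDist C j
      = #((univ.filter (fun j => C j = a)).sigma fun j => range (cycleDist C j)) := by
        simp [card_sigma]
    _ = #(univ : Finset (ZMod N)) := by
        refine card_bij (fun p _ => p.1 + (p.2 : ZMod N)) (fun _ _ => mem_univ _) ?_ ?_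
        · rintro ⟨j, t⟩ hjt ⟨j', t'⟩ hjt' h
          simp only [mem_sigma, mem_filter, mem_univ, true_and, mem_range] at hjt hjt'
          obtain ⟨rfl, rfl⟩ := eq_of_add_eq_add_of_lt_cycleDist C (hjt.1.trans hjt'.1.symm)
            hjt.2 hjt'.2 h
          rfl
        · intro k _
          obtain ⟨j, t, hj, ht, rfl⟩ := exists_add_eq_of_lt_cycleDist C ha k
          exact ⟨⟨j, t⟩, by simp [hj, ht], rfl⟩
    _ = N := by rw [card_univ, ZMod.card]

theorem sum_cycleDist_fiber_eq_of_card_eq [DecidableEq A] {C C' : ZMod N → A} {a : A}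
    (h : #(univ.filter (fun j => C j = a)) = #(univ.filter (fun j => C' j = a))) :
    ∑ j ∈ univ.filter (fun j => C j = a), cycleDist C j
      = ∑ j ∈ univ.filter (fun j => C' j = a), cycleDist C' j := by
  by_cases hC : ∃ j, C j = a
  · have hC' : ∃ j, C' j = a := by
      obtain ⟨j, hj⟩ := hC
      obtain ⟨j', hj'⟩ := card_pos.1 (h ▸ card_pos.2 ⟨j, by simpa using hj⟩)
      exact ⟨j', (mem_filter.1 hj').2⟩
    rw [sum_cycleDist_fiber C hC, sum_cycleDist_fiber C' hC']
  · have hempty : univ.filter (fun j => C j = a) = ∅ := by simpa using hC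
    rw [hempty, card_empty, eq_comm, card_eq_zero] at h
    rw [hempty, h, sum_empty, sum_empty]

theorem cycleDist_eq_or_eq_of_card_le [DecidableEq A] {C : ZMod N → A} {a : A}
    {d₁ d₂ : ℕ} (hd : d₁ ≠ d₂)
    (hcard : #(univ.filter fun j => C j = a)
      ≤ #(univ.filter fun j => C j = a ∧ cycleDist C j = d₁)
        + #(univ.filter fun j => C j = a ∧ cycleDist C j = d₂))
    {j : ZMod N} (hj : C j = a) : cycleDist C j = d₁ ∨ cycleDist C j = d₂ := by
  have hsub : (univ.filter fun j => C j = a ∧ cycleDist C j = d₁)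
      ∪ (univ.filter fun j => C j = a ∧ cycleDist C j = d₂) ⊆ univ.filter fun j => C j = a := by
    intro k hk
    simp only [mem_union, mem_filter, mem_univ, true_and] at hk ⊢
    tauto
  have hdisj : Disjoint (univ.filter fun j => C j = a ∧ cycleDist C j = d₁)
      (univ.filter fun j => C j = a ∧ cycleDist C j = d₂) :=
    disjoint_filter.2 fun k _ h₁ h₂ => hd (h₁.2.symm.trans h₂.2)
  rw [← card_union_of_disjoint hdisj] at hcard
  have hj' : j ∈ univ.filter fun j => C j = a := by simpa using hj
  rw [← eq_of_subset_of_card_le hsub hcard] at hj'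
  simpa [hj] using hj'

end CycleDist

/-- On integers, `x ↦ x ^ 2` lies above its chord through `q` and `q + 1`. -/
theorem sum_sq_le_sum_sq_of_consecutive {ι κ : Type*} {s : Finset ι} {t : Finset κ}
    {f : ι → ℕ} {g : κ → ℕ} (q : ℕ) (hcard : #s = #t) (hsum : ∑ i ∈ s, f i = ∑ k ∈ t, g k)
    (hf : ∀ i ∈ s, f i = q ∨ f i = q + 1) : ∑ i ∈ s, f i ^ 2 ≤ ∑ k ∈ t, g k ^ 2 := by
  zify at hsum ⊢
  have key : ∑ i ∈ s, ((f i : ℤ) ^ 2 + q * (q + 1)) ≤ ∑ k ∈ t, ((g k : ℤ) ^ 2 + q * (q + 1)) :=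
    calc ∑ i ∈ s, ((f i : ℤ) ^ 2 + q * (q + 1))
        = (2 * q + 1) * ∑ i ∈ s, (f i : ℤ) := by
          rw [mul_sum]
          refine sum_congr rfl fun i hi => ?_
          rcases hf i hi with h | h <;> rw [h] <;> push_cast <;> ring
      _ = (2 * q + 1) * ∑ k ∈ t, (g k : ℤ) := by rw [hsum]
      _ ≤ ∑ k ∈ t, ((g k : ℤ) ^ 2 + q * (q + 1)) := by
          rw [mul_sum]
          exact sum_le_sum fun k _ => by linarith [Int.le_self_sq ((g k : ℤ) - q)]
  simp only [sum_add_distrib, sum_const, hcard] at key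
  linarith

section Variance

variable {N : ℕ} [NeZero N] {A : Type*}

theorem cycleVariance_eq_cycleMoment2_sub_cycleMean_sq (C : ZMod N → A) :
    cycleVariance C = cycleMoment2 C - cycleMean C ^ 2 := by
  have hN : (N : ℚ) ≠ 0 := Nat.cast_ne_zero.2 (NeZero.ne N)
  simp only [cycleVariance, cycleMoment2, cycleMean, sub_sq, sum_add_distrib, sum_sub_distrib,
    ← sum_mul, ← mul_sum, sum_const, card_univ, ZMod.card, nsmul_eq_mul]
  field_simp
  ring

theorem cycleVariance_le_of_cycleDist_consecutive [Fintype A] [DecidableEq A]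
    {C C' : ZMod N → A}
    (hcard : ∀ a, #(univ.filter (fun j => C j = a)) = #(univ.filter (fun j => C' j = a)))
    (q : A → ℕ) (hq : ∀ j, cycleDist C j = q (C j) ∨ cycleDist C j = q (C j) + 1) :
    cycleVariance C ≤ cycleVariance C' := by
  have hfiber a := sum_cycleDist_fiber_eq_of_card_eq (hcard a)
  have hsum : ∑ j, cycleDist C j = ∑ j, cycleDist C' j := by
    rw [← sum_fiberwise univ C, ← sum_fiberwise univ C']
    exact sum_congr rfl fun a _ => hfiber a
  have hsq : ∑ j, cycleDist C j ^ 2 ≤ ∑ j, cycleDist C' j ^ 2 := by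
    rw [← sum_fiberwise univ C, ← sum_fiberwise univ C']
    refine sum_le_sum fun a _ => sum_sq_le_sum_sq_of_consecutive (q a) (hcard a) (hfiber a) ?_
    intro j hj
    rw [← (mem_filter.1 hj).2]
    exact hq j
  have hmean : cycleMean C = cycleMean C' := by
    simp only [cycleMean]; exact_mod_cast congrArg (fun n : ℕ => (n : ℚ) / N) hsum
  rw [cycleVariance_eq_cycleMoment2_sub_cycleMean_sq,
    cycleVariance_eq_cycleMoment2_sub_cycleMean_sq, hmean, cycleMoment2, cycleMoment2]
  gcongr ?_ / _ - _
  exact_mod_cast hsq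

end Variance

theorem sufficiency_euclid_profile_general (m₁ m₂ : ℕ)
    (N : ℕ) [NeZero N]
    (ℓ u : ℕ) (hℓ : ℓ = N / m₂) (hu : u = (N + m₂ - 1) / m₂)
    (C : ZMod N → Fin 2) (hC : Admissible ![m₁, m₂] C)
    (hcard1 : (Finset.univ.filter (fun j => C j = 0 ∧ cycleDist C j = 1)).card = m₁ - m₂)
    (hcard2 : (Finset.univ.filter (fun j => C j = 0 ∧ cycleDist C j = 2)).card = m₂)
    (ha2 : ∀ j : ZMod N, C j = 1 → cycleDist C j = ℓ ∨ cycleDist C j = u) :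
    ∀ C' : ZMod N → Fin 2, Admissible ![m₁, m₂] C' →
      cycleVariance C ≤ cycleVariance C' := by
  intro C' hC'
  refine cycleVariance_le_of_cycleDist_consecutive (fun a => (hC a).trans (hC' a).symm) ![1, ℓ]
    fun j => ?_
  obtain hj | hj : C j = 0 ∨ C j = 1 := by omega
  · rw [hj, Matrix.cons_val_zero]
    refine cycleDist_eq_or_eq_of_card_le (by norm_num) ?_ hj
    rw [hC 0, hcard1, hcard2, Matrix.cons_val_zero]
    omega
  · rw [hj, Matrix.cons_val_one, Matrix.cons_val_zero]
    have hu' := Nat.add_sub_one_div_eq_div_or_eq_div_add_one N m₂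
    have hdist := ha2 j hj
    omega

/-- Sufficiency of the Euclidean distance profile for variance minimality: an admissible
binary cycle whose symbol `a₁` has exactly `m₁ − m₂` instances at distance 1 and `m₂` at
distance 2, and whose symbol `a₂` only takes distances `ℓ = ⌊N/m₂⌋` or `u = ⌈N/m₂⌉`,
minimizes the variance among all admissible cycles. -/
theorem sufficiency_euclid_profile (m₁ m₂ : ℕ) (h2 : 1 ≤ m₂) (h12 : m₂ ≤ m₁)
    (N : ℕ) (hN : N = m₁ + m₂) [NeZero N]
    (ℓ u : ℕ) (hℓ : ℓ = N / m₂) (hu : u = (N + m₂ - 1) / m₂)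
    (C : ZMod N → Fin 2) (hC : Admissible ![m₁, m₂] C)
    (hcard1 : (Finset.univ.filter (fun j => C j = 0 ∧ cycleDist C j = 1)).card = m₁ - m₂)
    (hcard2 : (Finset.univ.filter (fun j => C j = 0 ∧ cycleDist C j = 2)).card = m₂)
    (ha2 : ∀ j : ZMod N, C j = 1 → cycleDist C j = ℓ ∨ cycleDist C j = u) :
    ∀ C' : ZMod N → Fin 2, Admissible ![m₁, m₂] C' →
      cycleVariance C ≤ cycleVariance C' :=
  sufficiency_euclid_profile_general m₁ m₂ N ℓ u hℓ hu C hC hcard1 hcard2 ha2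
end
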